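/- Let 0<b<1 and s_c = (1+b)/2. Suppose E, M, K > 0 satisfy M^{1-s_c} E^{s_c} < (s_c/(3+b))^{s_c} K, and suppose g: ℝ → [0,∞) is continuous with (f(g(t)))^{s_c} ≤ M^{1-s_c} E^{s_c} for all t, where f(x) = x^2/2 - x^{2(1+s_c)}/((3+b)K). If g(0) < K^{1/(2 s_c)}, then g(t) < K^{1/(2 s_c)} for all t; if g(0) > K^{1/(2 s_c)}, then g(t) > K^{1/(2 s_c)} for all t. -/

import Mathlib

/-! At `x_* = K ^ (1 / (2 s_c))` one computes `(f x_*) ^ s_c = (s_c / (3 + b)) ^ s_c * K`, which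
strictly exceeds every `(f (g t)) ^ s_c`; so `g` never takes the value `x_*`, and being continuous
on the connected line it stays on the side of `x_*` where it starts. -/

open Real

section Dichotomy

variable {X α : Type*} [TopologicalSpace X] [PreconnectedSpace X]
  [LinearOrder α] [TopologicalSpace α] [OrderClosedTopology α]
  {g : X → α} {c : α}

theorem Continuous.lt_of_forall_ne (hg : Continuous g) (hc : ∀ x, g x ≠ c) {x y : X}
    (hx : g x < c) : g y < c := by
  by_contra! hy
  obtain ⟨z, hz⟩ := intermediate_value_univ x y hg ⟨hx.le, hy⟩
  exact hc z hz

theorem Continuous.gt_of_forall_ne (hg : Continuous g) (hc : ∀ x, g x ≠ c) {x y : X}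
    (hx : c < g x) : c < g y := by
  by_contra! hy
  obtain ⟨z, hz⟩ := intermediate_value_univ y x hg ⟨hy, hx.le⟩
  exact hc z hz

end Dichotomy

section CriticalValue

variable {s K : ℝ}

theorem sq_rpow_one_div_two_mul (hK : 0 < K) (hs : 0 < s) :
    (K ^ (1 / (2 * s))) ^ 2 = K ^ (1 / s) := by
  rw [← rpow_natCast, ← rpow_mul hK.le]
  congr 1
  field_simp
  norm_num

theorem rpow_one_div_two_mul_rpow (hK : 0 < K) (hs : 0 < s) :
    (K ^ (1 / (2 * s))) ^ (2 * (1 + s)) = K ^ (1 / s) * K := by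
  have hexp : 1 / (2 * s) * (2 * (1 + s)) = 1 / s + 1 := by field_simp
  rw [← rpow_mul hK.le, hexp, rpow_add hK, rpow_one]

theorem critical_value_rpow (hK : 0 < K) (hs : 0 < s) :
    ((K ^ (1 / (2 * s))) ^ 2 / 2 - (K ^ (1 / (2 * s))) ^ (2 * (1 + s)) / (2 * (1 + s) * K)) ^ s
      = (s / (2 * (1 + s))) ^ s * K := by
  have hvalue : (K ^ (1 / (2 * s))) ^ 2 / 2
      - (K ^ (1 / (2 * s))) ^ (2 * (1 + s)) / (2 * (1 + s) * K)
      = s / (2 * (1 + s)) * K ^ (1 / s) := by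
    rw [sq_rpow_one_div_two_mul hK hs, rpow_one_div_two_mul_rpow hK hs]
    field_simp
    ring
  have hinv : 1 / s * s = 1 := by field_simp
  rw [hvalue, mul_rpow (by positivity) (by positivity), ← rpow_mul hK.le, hinv, rpow_one]

end CriticalValue

theorem stmt16_general (b sc E M K : ℝ) (hb : 0 < b) (hsc : sc = (1 + b) / 2)
    (hK : 0 < K)
    (hsub : M ^ (1 - sc) * E ^ sc < (sc / (3 + b)) ^ sc * K)
    (g : ℝ → ℝ) (hg : Continuous g)
    (f : ℝ → ℝ) (hf : ∀ x : ℝ, f x = x ^ 2 / 2 - x ^ (2 * (1 + sc)) / ((3 + b) * K))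
    (hfg : ∀ t, (f (g t)) ^ sc ≤ M ^ (1 - sc) * E ^ sc) :
    (g 0 < K ^ (1 / (2 * sc)) → ∀ t, g t < K ^ (1 / (2 * sc))) ∧
      (g 0 > K ^ (1 / (2 * sc)) → ∀ t, g t > K ^ (1 / (2 * sc))) := by
  have hsc0 : 0 < sc := by rw [hsc]; linarith
  have h3b : 3 + b = 2 * (1 + sc) := by rw [hsc]; ring
  have hne : ∀ t, g t ≠ K ^ (1 / (2 * sc)) := by
    intro t ht
    have hft := hfg t
    rw [ht, hf, h3b, critical_value_rpow hK hsc0] at hft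
    rw [h3b] at hsub
    linarith
  exact ⟨fun h0 _ => hg.lt_of_forall_ne hne h0, fun h0 _ => hg.gt_of_forall_ne hne h0⟩

theorem stmt16 (b sc E M K : ℝ) (hb : 0 < b) (hb1 : b < 1) (hsc : sc = (1 + b) / 2)
    (hE : 0 < E) (hM : 0 < M) (hK : 0 < K)
    (hsub : M ^ (1 - sc) * E ^ sc < (sc / (3 + b)) ^ sc * K)
    (g : ℝ → ℝ) (hg : Continuous g) (hgpos : ∀ t, 0 ≤ g t)
    (f : ℝ → ℝ) (hf : ∀ x : ℝ, f x = x ^ 2 / 2 - x ^ (2 * (1 + sc)) / ((3 + b) * K))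
    (hfg : ∀ t, (f (g t)) ^ sc ≤ M ^ (1 - sc) * E ^ sc) :
    (g 0 < K ^ (1 / (2 * sc)) → ∀ t, g t < K ^ (1 / (2 * sc))) ∧
      (g 0 > K ^ (1 / (2 * sc)) → ∀ t, g t > K ^ (1 / (2 * sc))) :=
  stmt16_general b sc E M K hb hsc hK hsub g hg f hf hfg
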